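/- Let M > 0, let T be real, let R > 0 with R ≠ 2M, and let α, β ∈ {−1, +1} satisfy α·β·(R − 2M) > 0. Define the double-null Eddington–Finkelstein functions U := α·(T − R − 2M·ln|R/(2M) − 1|) and V := β·(T + R + 2M·ln|R/(2M) − 1|). Then α·β·exp((−α·U + β·V)/(4M)) > −1 and 2M·κ( α·β·exp((−α·U + β·V)/(4M)) ) = R. -/

import Mathlib

/-- `f x = (x - 1) * exp x`; in the paper this is `κ⁻¹`. -/
noncomputable def f (x : ℝ) : ℝ := (x - 1) * Real.exp x

/-- The Kruskal function `κ`, the inverse of the restriction of `f` to `(0, ∞)`. -/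
noncomputable def kappa (z : ℝ) : ℝ := Function.invFunOn f (Set.Ioi 0) z

/-!
With `r = R / (2M)`, the combination `-αU + βV` eliminates `T` and equals `4M (r + log |r - 1|)`,
so the exponential is `|r - 1| eʳ`. The sign condition says that `αβ` is the sign of `r - 1`,
hence `αβ |r - 1| eʳ = (r - 1) eʳ = f r` with `r > 0`, and `κ (f r) = r`.
-/

open Real Set

lemma hasDerivAt_f (x : ℝ) : HasDerivAt f (x * exp x) x :=
  (((hasDerivAt_id' x).sub_const 1).mul (hasDerivAt_exp x)).congr_deriv (by ring)

lemma f_strictMonoOn : StrictMonoOn f (Ici 0) := by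
  refine strictMonoOn_of_deriv_pos (convex_Ici 0)
    (fun x _ => (hasDerivAt_f x).continuousAt.continuousWithinAt) fun x hx => ?_
  rw [interior_Ici] at hx
  rw [(hasDerivAt_f x).deriv]
  exact mul_pos hx (exp_pos x)

lemma kappa_f {x : ℝ} (hx : 0 < x) : kappa (f x) = x :=
  (f_strictMonoOn.injOn.mono (Ioi_subset_Ici le_rfl)).leftInvOn_invFunOn hx

lemma neg_one_lt_f {x : ℝ} (hx : 0 < x) : -1 < f x := by
  simpa [f] using f_strictMonoOn self_mem_Ici hx.le hx

lemma mul_abs_eq_of_mul_self_eq_one {α : Type*} [Ring α] [LinearOrder α] [IsStrictOrderedRing α]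
    {ε a : α} (hε : ε * ε = 1) (h : 0 < ε * a) : ε * |a| = a := by
  have habs : |ε| = 1 := (abs_eq zero_le_one).mpr (mul_self_eq_one_iff.mp hε)
  have : |a| = ε * a := by
    rw [← abs_of_pos h, abs_mul, habs, one_mul]
  rw [this, ← mul_assoc, hε, one_mul]

lemma mul_exp_add_log_abs_eq_f {ε x : ℝ} (hε : ε * ε = 1) (h : 0 < ε * (x - 1)) :
    ε * exp (x + log |x - 1|) = f x := by
  have hx : x - 1 ≠ 0 := fun hx => by simp [hx] at h
  rw [exp_add, exp_log (abs_pos.mpr hx), f]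
  linear_combination exp x * mul_abs_eq_of_mul_self_eq_one hε h

theorem DNEF_radius_formula_general (M T R α β U V : ℝ)
    (hM : M > 0) (hR : R > 0)
    (hα : α = -1 ∨ α = 1) (hβ : β = -1 ∨ β = 1)
    (hsign : α * β * (R - 2 * M) > 0)
    (hU : U = α * (T - R - 2 * M * Real.log |R / (2 * M) - 1|))
    (hV : V = β * (T + R + 2 * M * Real.log |R / (2 * M) - 1|)) :
    α * β * Real.exp ((-α * U + β * V) / (4 * M)) > -1 ∧
    2 * M * kappa (α * β * Real.exp ((-α * U + β * V) / (4 * M))) = R := by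
  set r := R / (2 * M) with hr
  have hα2 : α * α = 1 := mul_self_eq_one_iff.mpr hα.symm
  have hβ2 : β * β = 1 := mul_self_eq_one_iff.mpr hβ.symm
  have hr_pos : 0 < r := by positivity
  have hexponent : (-α * U + β * V) / (4 * M) = r + log |r - 1| := by
    have hRr : 2 * M * r = R := by rw [hr]; field_simp
    set L := log |r - 1|
    rw [hU, hV, div_eq_iff (by positivity)]
    linear_combination (R - T + 2 * M * L) * hα2 + (T + R + 2 * M * L) * hβ2 - 2 * hRr
  have hsign' : 0 < α * β * (r - 1) := by
    have : r - 1 = (R - 2 * M) / (2 * M) := by rw [hr]; field_simp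
    rw [this, ← mul_div_assoc]
    positivity
  have hkruskal : α * β * exp ((-α * U + β * V) / (4 * M)) = f r := by
    rw [hexponent]
    exact mul_exp_add_log_abs_eq_f (by linear_combination β * β * hα2 + hβ2) hsign'
  rw [hkruskal, kappa_f hr_pos, hr]
  exact ⟨neg_one_lt_f hr_pos, by field_simp⟩

theorem DNEF_radius_formula (M T R α β U V : ℝ)
    (hM : M > 0) (hR : R > 0) (hR2M : R ≠ 2 * M)
    (hα : α = -1 ∨ α = 1) (hβ : β = -1 ∨ β = 1)
    (hsign : α * β * (R - 2 * M) > 0)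
    (hU : U = α * (T - R - 2 * M * Real.log |R / (2 * M) - 1|))
    (hV : V = β * (T + R + 2 * M * Real.log |R / (2 * M) - 1|)) :
    α * β * Real.exp ((-α * U + β * V) / (4 * M)) > -1 ∧
    2 * M * kappa (α * β * Real.exp ((-α * U + β * V) / (4 * M))) = R :=
  DNEF_radius_formula_general M T R α β U V hM hR hα hβ hsign hU hV
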